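/- arXiv:1905.00585 — 8 statements merged into one kernel-verified Lean document; each statement's English description precedes it below -/
import Mathlib

section
/- For every α > 0, β > 0 and w ≥ 0, there exists a unique a ≥ 0 satisfying the fixed-point equation a = w/α + β(1 − exp(−a/β)). (This is the equilibrium condition characterizing the unique mean field equilibrium action under type-A feedback with quadratic cost.) -/
lemma typeA_key (β : ℝ) (hβ : 0 < β) {a b : ℝ} (hb : 0 ≤ b) (hab : b < a) :
    β * (Real.exp (-b / β) - Real.exp (-a / β)) < a - b := by
  have h1 : Real.exp (-b / β) ≤ 1 := by
    rw [Real.exp_le_one_iff]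
    exact div_nonpos_of_nonpos_of_nonneg (neg_nonpos_of_nonneg hb) hβ.le
  have hx : -((a - b) / β) ≠ 0 := by
    have : (a - b) / β > 0 := div_pos (sub_pos.2 hab) hβ
    linarith
  have h2 : -((a - b) / β) + 1 < Real.exp (-((a - b) / β)) := Real.add_one_lt_exp hx
  have hsplit : Real.exp (-a / β) = Real.exp (-b / β) * Real.exp (-((a - b) / β)) := by
    rw [← Real.exp_add]; ring_nf
  have hfac : Real.exp (-b / β) - Real.exp (-a / β)
      = Real.exp (-b / β) * (1 - Real.exp (-((a - b) / β))) := by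
    rw [hsplit]; ring
  have hnn : 0 ≤ 1 - Real.exp (-((a - b) / β)) := by
    have : Real.exp (-((a - b) / β)) ≤ 1 := by
      rw [Real.exp_le_one_iff]
      have : (a - b) / β > 0 := div_pos (sub_pos.2 hab) hβ
      linarith
    linarith
  have h3 : Real.exp (-b / β) - Real.exp (-a / β) < (a - b) / β := by
    rw [hfac]
    calc Real.exp (-b / β) * (1 - Real.exp (-((a - b) / β)))
        ≤ 1 * (1 - Real.exp (-((a - b) / β))) := by
          exact mul_le_mul_of_nonneg_right h1 hnn
      _ = 1 - Real.exp (-((a - b) / β)) := one_mul _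
      _ < (a - b) / β := by linarith
  calc β * (Real.exp (-b / β) - Real.exp (-a / β)) < β * ((a - b) / β) :=
        (mul_lt_mul_iff_right₀ hβ).2 h3
    _ = a - b := by field_simp

/-- For every α > 0, β > 0 and w ≥ 0, there exists a unique a ≥ 0 satisfying
the fixed-point equation a = w/α + β(1 − exp(−a/β)). -/
theorem typeA_fixed_point_exists_unique (α β w : ℝ) (hα : 0 < α) (hβ : 0 < β) (hw : 0 ≤ w) :
    ∃! a : ℝ, 0 ≤ a ∧ a = w / α + β * (1 - Real.exp (-a / β)) := by
  set f : ℝ → ℝ := fun a => a - β * (1 - Real.exp (-a / β)) - w / α with hf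
  have hcont : Continuous f := by fun_prop
  set M : ℝ := w / α + β with hM
  have hwα : 0 ≤ w / α := div_nonneg hw hα.le
  have hM0 : 0 ≤ M := by positivity
  have hf0 : f 0 ≤ 0 := by simp [hf]; positivity
  have hfM : 0 ≤ f M := by
    have : f M = β * Real.exp (-M / β) := by simp [hf, hM]; ring
    rw [this]; positivity
  obtain ⟨a, haI, hfa⟩ := intermediate_value_Icc hM0 hcont.continuousOn ⟨hf0, hfM⟩
  refine ⟨a, ⟨haI.1, by have := hfa; simp [hf] at this; linarith⟩, ?_⟩
  rintro b ⟨hb0, hbeq⟩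
  have ha0 : 0 ≤ a := haI.1
  have haeq : a = w / α + β * (1 - Real.exp (-a / β)) := by
    have := hfa; simp [hf] at this; linarith
  by_contra hne
  rcases lt_or_gt_of_ne hne with h | h
  · have := typeA_key β hβ hb0 h
    have hd : a - b = β * (Real.exp (-b / β) - Real.exp (-a / β)) := by
      rw [haeq, hbeq] at *; ring_nf; linarith [haeq, hbeq]
    linarith
  · have := typeA_key β hβ ha0 h
    have hd : b - a = β * (Real.exp (-a / β) - Real.exp (-b / β)) := by
      rw [haeq, hbeq] at *; ring_nf; linarith [haeq, hbeq]
    linarith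
end

section
/- For every α > 0, β > 0 and w ≥ 0, the unique a ≥ 0 satisfying a = w/α + β(1 − exp(−a/β)) obeys the bounds w/α ≤ a ≤ w/α + β; moreover if w > 0 then the inequalities are strict: w/α < a < w/α + β. -/
/-- The unique nonnegative solution of the type-A fixed-point equation
satisfies w/α ≤ a ≤ w/α + β, with strict inequalities when w > 0. -/
theorem typeA_fixed_point_bounds (α β w a : ℝ) (hα : 0 < α) (hβ : 0 < β) (hw : 0 ≤ w)
    (ha : 0 ≤ a) (hfix : a = w / α + β * (1 - Real.exp (-a / β))) :
    w / α ≤ a ∧ a ≤ w / α + β ∧ (0 < w → w / α < a ∧ a < w / α + β) := by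
  have hpos : 0 < Real.exp (-a / β) := Real.exp_pos _
  have hle1 : Real.exp (-a / β) ≤ 1 := by
    apply Real.exp_le_one_iff.mpr
    exact div_nonpos_of_nonpos_of_nonneg (neg_nonpos.mpr ha) hβ.le
  refine ⟨by nlinarith, by nlinarith, fun hwpos => ?_⟩
  have hwa : 0 < w / α := div_pos hwpos hα
  have hapos : 0 < a := by nlinarith
  have hlt1 : Real.exp (-a / β) < 1 := by
    apply Real.exp_lt_one_iff.mpr
    exact div_neg_of_neg_of_pos (neg_neg_of_pos hapos) hβ
  exact ⟨by nlinarith, by nlinarith⟩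
end

section
/- For fixed α > 0 and β > 0, the difference a_A(w) − w/α tends to β as w → +∞, where a_A(w) is the unique nonnegative solution of a = w/α + β(1 − exp(−a/β)). -/
/-- For fixed α > 0 and β > 0, a_A(w) − w/α → β as w → +∞, where a_A(w)
is the unique nonnegative solution of a = w/α + β(1 − exp(−a/β)). -/
theorem typeA_limit_atTop (α β : ℝ) (hα : 0 < α) (hβ : 0 < β) (aA : ℝ → ℝ)
    (haA : ∀ w, 0 ≤ w → 0 ≤ aA w ∧ aA w = w / α + β * (1 - Real.exp (-(aA w) / β))) :
    Filter.Tendsto (fun w => aA w - w / α) Filter.atTop (nhds β) := by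
  have hge : ∀ᶠ w in Filter.atTop, w / α ≤ aA w := by
    filter_upwards [Filter.eventually_ge_atTop (0:ℝ)] with w hw
    obtain ⟨h0, heq⟩ := haA w hw
    have hexp : Real.exp (-(aA w) / β) ≤ 1 := by
      apply Real.exp_le_one_iff.2
      have : -(aA w) ≤ 0 := by linarith
      exact div_nonpos_of_nonpos_of_nonneg this hβ.le
    nlinarith
  have htop : Filter.Tendsto aA Filter.atTop Filter.atTop := by
    apply Filter.tendsto_atTop_mono' _ hge
    exact Filter.Tendsto.atTop_div_const hα Filter.tendsto_id
  have hbot : Filter.Tendsto (fun w => -(aA w) / β) Filter.atTop Filter.atBot := by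
    apply Filter.Tendsto.atBot_div_const hβ
    exact Filter.tendsto_neg_atBot_iff.2 htop
  have hlim : Filter.Tendsto (fun w => β * (1 - Real.exp (-(aA w) / β)))
      Filter.atTop (nhds β) := by
    have := (Real.tendsto_exp_atBot.comp hbot)
    have h2 : Filter.Tendsto (fun w => 1 - Real.exp (-(aA w) / β)) Filter.atTop (nhds 1) := by
      simpa using (tendsto_const_nhds.sub this)
    simpa using (tendsto_const_nhds.mul h2)
  apply hlim.congr'
  filter_upwards [Filter.eventually_ge_atTop (0:ℝ)] with w hw
  have := (haA w hw).2
  linarith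
end

section
/- Let α > 0, β > 0, θ > 0 and c₁ < c₂ be real numbers, and set u = max(αθ − √(2αβ(c₂ − c₁)), 0). Define U(a) = aw − (α/2)a² + β·(c₁ if a < θ, c₂ if a ≥ θ) for a ≥ 0. If u ≤ w < αθ, then a = θ maximizes U over [0, ∞), i.e., U(θ) ≥ U(a) for all a ≥ 0. -/
/-- With u = max(αθ − √(2αβ(c₂ − c₁)), 0), if u ≤ w < αθ then a = θ maximizes
U(a) = aw − (α/2)a² + β(c₁ 1_{a<θ} + c₂ 1_{a≥θ}) over [0, ∞). -/
theorem typeB_best_response_threshold (α β θ c₁ c₂ w u : ℝ)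
    (hα : 0 < α) (hβ : 0 < β) (hθ : 0 < θ) (hc : c₁ < c₂)
    (hu : u = max (α * θ - Real.sqrt (2 * α * β * (c₂ - c₁))) 0)
    (hw₁ : u ≤ w) (hw₂ : w < α * θ) :
    ∀ a, 0 ≤ a →
      a * w - α / 2 * a ^ 2 + β * (if a < θ then c₁ else c₂) ≤
        θ * w - α / 2 * θ ^ 2 + β * c₂ := by
  intro a ha
  have hs : Real.sqrt (2 * α * β * (c₂ - c₁)) ^ 2 = 2 * α * β * (c₂ - c₁) :=
    Real.sq_sqrt (by nlinarith [mul_pos (mul_pos hα hβ) (sub_pos.2 hc)])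
  by_cases hlt : a < θ
  · simp only [if_pos hlt]
    have h1 : α * θ - Real.sqrt (2 * α * β * (c₂ - c₁)) ≤ w :=
      le_trans (by rw [hu]; exact le_max_left _ _) hw₁
    have h2 : 0 ≤ α * θ - w := by linarith
    nlinarith [sq_nonneg (w - α * a), sq_nonneg (α * θ - w),
      Real.sqrt_nonneg (2 * α * β * (c₂ - c₁))]
  · simp only [if_neg hlt]
    push_neg at hlt
    nlinarith [mul_nonneg (sub_nonneg.2 hlt) (sub_nonneg.2 hlt)]
end

section
/- Let α > 0, β > 0, θ > 0 and c₁ < c₂ be real numbers, and set u = max(αθ − √(2αβ(c₂ − c₁)), 0). Define U(a) = aw − (α/2)a² + β·(c₁ if a < θ, c₂ if a ≥ θ) for a ≥ 0. If 0 ≤ w < u or w ≥ αθ, then a = w/α maximizes U over [0, ∞), i.e., U(w/α) ≥ U(a) for all a ≥ 0. -/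
/-- With u = max(αθ − √(2αβ(c₂ − c₁)), 0), if 0 ≤ w < u or w ≥ αθ then
a = w/α maximizes U(a) = aw − (α/2)a² + β(c₁ 1_{a<θ} + c₂ 1_{a≥θ}) over [0, ∞). -/
theorem typeB_best_response_interior (α β θ c₁ c₂ w u : ℝ)
    (hα : 0 < α) (hβ : 0 < β) (hθ : 0 < θ) (hc : c₁ < c₂)
    (hu : u = max (α * θ - Real.sqrt (2 * α * β * (c₂ - c₁))) 0)
    (hw : (0 ≤ w ∧ w < u) ∨ α * θ ≤ w) :
    ∀ a, 0 ≤ a →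
      a * w - α / 2 * a ^ 2 + β * (if a < θ then c₁ else c₂) ≤
        (w / α) * w - α / 2 * (w / α) ^ 2 + β * (if w / α < θ then c₁ else c₂) := by
  intro a ha
  have hs0 : (0:ℝ) ≤ 2 * α * β * (c₂ - c₁) := by
    have : 0 < c₂ - c₁ := by linarith
    positivity
  set s := Real.sqrt (2 * α * β * (c₂ - c₁)) with hsdef
  have hs : s ^ 2 = 2 * α * β * (c₂ - c₁) := Real.sq_sqrt hs0
  have hsnn : 0 ≤ s := Real.sqrt_nonneg _
  have hkey : (w / α) * w - α / 2 * (w / α) ^ 2 = w ^ 2 / (2 * α) := by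
    field_simp; ring
  rcases hw with ⟨hw0, hwu⟩ | hw2
  · -- low-type case
    have hwlt : w < α * θ - s := by
      rw [hu] at hwu
      rcases le_or_gt (α * θ - s) 0 with h | h
      · rw [max_eq_right h] at hwu; linarith
      · rwa [max_eq_left h.le] at hwu
    have hwθ : w / α < θ := by
      rw [div_lt_iff₀ hα]; nlinarith
    rw [if_pos hwθ, hkey]
    by_cases haθ : a < θ
    · rw [if_pos haθ]
      have h2 : 0 ≤ (α * a - w) ^ 2 := sq_nonneg _
      have : a * w - α / 2 * a ^ 2 ≤ w ^ 2 / (2 * α) := by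
        rw [le_div_iff₀ (by linarith : (0:ℝ) < 2 * α)]; nlinarith
      linarith
    · rw [if_neg haθ]
      have haθ' : θ ≤ a := le_of_not_gt haθ
      have h1 : s < α * a - w := by nlinarith
      have h2 : s ^ 2 ≤ (α * a - w) ^ 2 := by nlinarith
      rw [hs] at h2
      have : a * w - α / 2 * a ^ 2 + β * (c₂ - c₁) ≤ w ^ 2 / (2 * α) := by
        rw [le_div_iff₀ (by linarith : (0:ℝ) < 2 * α)]; nlinarith
      linarith
  · -- high-type case
    have hwθ : ¬ (w / α < θ) := by
      rw [not_lt, le_div_iff₀ hα]; linarith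
    rw [if_neg hwθ, hkey]
    have h2 : 0 ≤ (α * a - w) ^ 2 := sq_nonneg _
    have hq : a * w - α / 2 * a ^ 2 ≤ w ^ 2 / (2 * α) := by
      rw [le_div_iff₀ (by linarith : (0:ℝ) < 2 * α)]; nlinarith
    by_cases haθ : a < θ
    · rw [if_pos haθ]
      have : β * c₁ ≤ β * c₂ := by nlinarith
      linarith
    · rw [if_neg haθ]; linarith
end

section
/- Let f be a continuous nonnegative probability density supported on [0, ∞) with cdf F and finite mean E[w], with 0 < F(u) < 1 for all u > 0. Then for every u > 0, X_B(u) ≥ u − E[w]; consequently X_B(u) → +∞ as u → +∞. -/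
/-!
Integrating by parts, `∫₀ᵘ F = u F(u) - ∫₀ᵘ w f(w) dw`, and the tail of the mean satisfies
`∫ᵤ^∞ w f(w) dw ≥ u (1 - F(u))`, so `∫₀ᵘ F ≥ u - E[w]`. Both terms of `X_B(u)` are nonnegative
and `F(u) ≤ 1`, hence `X_B(u) ≥ (∫₀ᵘ F) / F(u) ≥ ∫₀ᵘ F ≥ u - E[w]`. The integration by parts
is the one for absolutely continuous functions: the primitive `F` of an integrable `f` is
absolutely continuous, with derivative `f` almost everywhere.
-/

open MeasureTheory Set Filter

theorem integral_id_mul_eq_sub_integral_primitive {f : ℝ → ℝ} {a b : ℝ}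
    (hf : IntervalIntegrable f volume a b) :
    ∫ x in a..b, x * f x = b * (∫ t in a..b, f t) - ∫ x in a..b, ∫ t in a..x, f t := by
  have hprim := hf.absolutelyContinuousOnInterval_intervalIntegral (c := a) left_mem_uIcc
  have hid : AbsolutelyContinuousOnInterval id a b :=
    (LipschitzWith.id.lipschitzOnWith (s := uIcc a b)).absolutelyContinuousOnInterval
  have hderiv :
      ∫ x in a..b, x * deriv (fun x => ∫ t in a..x, f t) x = ∫ x in a..b, x * f x := by
    refine intervalIntegral.integral_congr_ae ?_
    filter_upwards [hf.ae_hasDerivAt_integral] with x hx hxab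
    rw [(hx (uIoc_subset_uIcc hxab) a left_mem_uIcc).deriv]
  simpa [hderiv] using hid.integral_mul_deriv_eq_deriv_mul hprim

theorem mul_integral_Ioi_le_integral_Ioi_mul {f : ℝ → ℝ} {u : ℝ}
    (hf : IntegrableOn f (Ioi u)) (hwf : IntegrableOn (fun w => w * f w) (Ioi u))
    (hnn : ∀ w ∈ Ioi u, 0 ≤ f w) :
    u * ∫ w in Ioi u, f w ≤ ∫ w in Ioi u, w * f w := by
  rw [← integral_const_mul]
  exact setIntegral_mono_on (hf.const_mul u) hwf measurableSet_Ioi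
    fun w hw => mul_le_mul_of_nonneg_right hw.le (hnn w hw)

theorem sub_integral_mul_le_integral_primitive {f : ℝ → ℝ} {a u : ℝ} (hau : a ≤ u)
    (hnn : ∀ w, 0 ≤ f w) (hint : IntegrableOn f (Ici a)) (htotal : ∫ w in Ici a, f w = 1)
    (hmean : IntegrableOn (fun w => w * f w) (Ici a)) :
    u - ∫ w in Ici a, w * f w ≤ ∫ x in a..u, ∫ t in a..x, f t := by
  rw [integrableOn_Ici_iff_integrableOn_Ioi] at hint hmean
  rw [integral_Ici_eq_integral_Ioi] at htotal ⊢
  have hint_u := hint.mono_set (Ioi_subset_Ioi hau)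
  have hmean_u := hmean.mono_set (Ioi_subset_Ioi hau)
  have hmass := intervalIntegral.integral_interval_add_Ioi hint hint_u
  have hsplit := intervalIntegral.integral_interval_add_Ioi hmean hmean_u
  have hparts := integral_id_mul_eq_sub_integral_primitive
    ((intervalIntegrable_iff_integrableOn_Ioc_of_le hau).2 (hint.mono_set Ioc_subset_Ioi_self))
  have htail := mul_integral_Ioi_le_integral_Ioi_mul hint_u hmean_u fun w _ => hnn w
  have hmass_u : u * (∫ t in a..u, f t) + u * ∫ w in Ioi u, f w = u := by
    rw [← mul_add, hmass, htotal, mul_one]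
  linarith

theorem le_div_one_sub_add_div {A B p : ℝ} (hA : 0 ≤ A) (hB : 0 ≤ B) (hp₀ : 0 < p)
    (hp₁ : p ≤ 1) :
    B ≤ A / (1 - p) + B / p := by
  have hBp : B ≤ B / p := by rw [le_div_iff₀ hp₀]; nlinarith
  have hAp : 0 ≤ A / (1 - p) := div_nonneg hA (by linarith)
  linarith

theorem XB_limit_atTop_general (f : ℝ → ℝ)
    (hnn : ∀ w, 0 ≤ f w)
    (hint : IntegrableOn f (Set.Ici 0))
    (htotal : (∫ w in Set.Ici (0:ℝ), f w) = 1)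
    (hmean : IntegrableOn (fun w => w * f w) (Set.Ici 0))
    (F : ℝ → ℝ) (hF : ∀ u, F u = ∫ w in (0:ℝ)..u, f w)
    (hFio : ∀ u, 0 < u → 0 < F u ∧ F u < 1) :
    (∀ u, 0 < u →
      u - (∫ w in Set.Ici (0:ℝ), w * f w) ≤
        (∫ w in Set.Ici u, (1 - F w)) / (1 - F u) + (∫ w in (0:ℝ)..u, F w) / F u) ∧
    Filter.Tendsto
      (fun u => (∫ w in Set.Ici u, (1 - F w)) / (1 - F u) +
        (∫ w in (0:ℝ)..u, F w) / F u)
      Filter.atTop Filter.atTop := by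
  have hbound : ∀ u, 0 < u → u - (∫ w in Ici (0:ℝ), w * f w) ≤
      (∫ w in Ici u, (1 - F w)) / (1 - F u) + (∫ w in (0:ℝ)..u, F w) / F u := by
    intro u hu
    have hupper : 0 ≤ ∫ w in Ici u, (1 - F w) :=
      setIntegral_nonneg measurableSet_Ici fun w hw =>
        sub_nonneg.2 (hFio w (hu.trans_le hw)).2.le
    have hlower : 0 ≤ ∫ w in (0:ℝ)..u, F w := by
      rw [intervalIntegral.integral_of_le hu.le]
      exact setIntegral_nonneg measurableSet_Ioc fun w hw => (hFio w hw.1).1.le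
    calc u - (∫ w in Ici (0:ℝ), w * f w) ≤ ∫ w in (0:ℝ)..u, F w := by
          simpa only [hF] using sub_integral_mul_le_integral_primitive hu.le hnn hint htotal hmean
      _ ≤ _ := le_div_one_sub_add_div hupper hlower (hFio u hu).1 (hFio u hu).2.le
  refine ⟨hbound, tendsto_atTop_mono' _ ((eventually_gt_atTop 0).mono hbound) ?_⟩
  exact tendsto_atTop_add_const_right _ _ tendsto_id

/-- For every u > 0, X_B(u) ≥ u − E[w]; consequently X_B(u) → +∞ as
u → +∞. -/
theorem XB_limit_atTop (f : ℝ → ℝ) (hcont : ContinuousOn f (Set.Ici 0))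
    (hnn : ∀ w, 0 ≤ f w) (hsupp : ∀ w, w < 0 → f w = 0)
    (hint : IntegrableOn f (Set.Ici 0))
    (htotal : (∫ w in Set.Ici (0:ℝ), f w) = 1)
    (hmean : IntegrableOn (fun w => w * f w) (Set.Ici 0))
    (F : ℝ → ℝ) (hF : ∀ u, F u = ∫ w in (0:ℝ)..u, f w)
    (hFio : ∀ u, 0 < u → 0 < F u ∧ F u < 1) :
    (∀ u, 0 < u →
      u - (∫ w in Set.Ici (0:ℝ), w * f w) ≤
        (∫ w in Set.Ici u, (1 - F w)) / (1 - F u) + (∫ w in (0:ℝ)..u, F w) / F u) ∧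
    Filter.Tendsto
      (fun u => (∫ w in Set.Ici u, (1 - F w)) / (1 - F u) +
        (∫ w in (0:ℝ)..u, F w) / F u)
      Filter.atTop Filter.atTop :=
  XB_limit_atTop_general f hnn hint htotal hmean F hF hFio
end

section
/- Let f be a continuous probability density on [0, ∞) that is strictly positive on (0, ∞), with cdf F and finite mean E[w]. Let α > 0, β > 0, θ > 0 satisfy θ > √(2βE[w]/α), i.e., βE[w] < αθ²/2. Define X_B(u) = (∫ᵤ^∞ (1 − F(w))dw)/(1 − F(u)) + (∫₀ᵘ F(w)dw)/F(u) for u > 0 and X_B(0) = E[w]. Then there exists u ∈ [0, αθ] with β·X_B(u) = (αθ − u)²/(2α). (This is the fixed-point condition whose solution u^MFE characterizes a mean field equilibrium under type-B feedback.) -/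
/-!
Consider `g u = β X_B(u) - (αθ - u)² / (2α)` on `[0, αθ]`. The tail term of `X_B` is continuous
because `1 - F` is integrable, and `∫₀ᵘ F / F(u) ∈ [0, u]` vanishes at `0`, so `g` is continuous.
At `u = αθ` we have `g > 0`. At `0`, `g = β ∫₀^∞ (1 - F) - αθ²/2 < 0`: integrating by parts,
`∫₀ᵇ (1 - F) = b (1 - F b) + ∫₀ᵇ w f`, and `b (1 - F b) ≤ ∫_b^∞ w f` (Markov), so
`∫₀^∞ (1 - F) ≤ E[w]`. The intermediate value theorem gives a zero of `g`, necessarily at `u > 0`.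
-/

open MeasureTheory Filter Set Topology

lemma integrable_of_integrableOn_Ici {g : ℝ → ℝ} (hg : ∀ w, w < 0 → g w = 0)
    (h : IntegrableOn g (Ici 0)) : Integrable g := by
  have : (Ici (0:ℝ)).indicator g = g := indicator_eq_self.2 fun w hw => by
    by_contra hw'
    exact hw (hg w (not_le.1 hw'))
  rwa [← this, integrable_indicator_iff measurableSet_Ici]

lemma integral_Ioi_pos {g : ℝ → ℝ} {a : ℝ} (hg : IntegrableOn g (Ioi a))
    (hpos : ∀ x, a < x → 0 < g x) : 0 < ∫ x in Ioi a, g x := by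
  have hsupport : Function.support g ∩ Ioi a = Ioi a :=
    inter_eq_right.2 fun x hx => (hpos x hx).ne'
  rw [setIntegral_pos_iff_support_of_nonneg_ae
    (ae_restrict_of_forall_mem measurableSet_Ioi fun x hx => (hpos x hx).le) hg, hsupport,
    Real.volume_Ioi]
  exact ENNReal.zero_lt_top

lemma integrableOn_Ioi_of_intervalIntegral_le {g : ℝ → ℝ} {a C : ℝ} (hg : Continuous g)
    (hnn : ∀ x, a < x → 0 ≤ g x) (hle : ∀ b, a ≤ b → ∫ x in a..b, g x ≤ C) :
    IntegrableOn g (Ioi a) := by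
  refine integrableOn_Ioi_of_intervalIntegral_norm_bounded C a
    (fun b => hg.integrableOn_Ioc) tendsto_id ?_
  filter_upwards [eventually_ge_atTop a] with b hb
  calc ∫ x in a..id b, ‖g x‖ = ∫ x in a..b, g x :=
        intervalIntegral.integral_congr_ae (ae_of_all _ fun x hx =>
          Real.norm_of_nonneg (hnn x (by rw [id, uIoc_of_le hb] at hx; exact hx.1)))
    _ ≤ C := hle b hb

lemma setIntegral_Ioi_le_of_intervalIntegral_le {g : ℝ → ℝ} {a C : ℝ}
    (hg : IntegrableOn g (Ioi a)) (hle : ∀ b, a ≤ b → ∫ x in a..b, g x ≤ C) :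
    ∫ x in Ioi a, g x ≤ C :=
  le_of_tendsto (intervalIntegral_tendsto_integral_Ioi a hg tendsto_id)
    (eventually_atTop.2 ⟨a, hle⟩)

lemma continuousOn_integral_Ici {g : ℝ → ℝ} {a : ℝ} (hg : Continuous g)
    (hint : IntegrableOn g (Ioi a)) : ContinuousOn (fun u => ∫ x in Ici u, g x) (Ici a) := by
  have hprim : Continuous fun u => ∫ x in a..u, g x :=
    intervalIntegral.continuous_primitive (fun _ _ => hg.intervalIntegrable _ _) a
  refine ((continuous_const (y := ∫ x in Ioi a, g x)).sub hprim).continuousOn.congr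
    fun u hu => ?_
  rw [Pi.sub_apply, ← intervalIntegral.integral_Ioi_sub_Ioi hint hu, sub_sub_cancel,
    integral_Ici_eq_integral_Ioi]

lemma integral_div_le_of_monotone {F : ℝ → ℝ} {u : ℝ} (hu : 0 ≤ u) (hmono : Monotone F)
    (hFu : 0 < F u) : (∫ w in (0:ℝ)..u, F w) / F u ≤ u := by
  rw [div_le_iff₀ hFu]
  calc ∫ w in (0:ℝ)..u, F w ≤ ∫ w in (0:ℝ)..u, F u :=
        intervalIntegral.integral_mono_on hu hmono.intervalIntegrable intervalIntegrable_const
          fun w hw => hmono hw.2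
    _ = u * F u := by simp

section Cdf

variable {f F : ℝ → ℝ}

lemma continuous_cdf (hf : Integrable f) (hF : ∀ u, F u = ∫ w in (0:ℝ)..u, f w) :
    Continuous F := by
  rw [funext hF]
  exact intervalIntegral.continuous_primitive (fun _ _ => hf.intervalIntegrable) 0

lemma cdf_monotone (hnn : ∀ w, 0 ≤ f w) (hf : Integrable f)
    (hF : ∀ u, F u = ∫ w in (0:ℝ)..u, f w) : Monotone F := by
  intro a b hab
  rw [hF, hF, ← intervalIntegral.integral_add_adjacent_intervals (b := a) (c := b)
    hf.intervalIntegrable hf.intervalIntegrable, le_add_iff_nonneg_right]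
  exact intervalIntegral.integral_nonneg hab fun w _ => hnn w

lemma cdf_pos (hpos : ∀ w, 0 < w → 0 < f w) (hf : Integrable f)
    (hF : ∀ u, F u = ∫ w in (0:ℝ)..u, f w) {u : ℝ} (hu : 0 < u) : 0 < F u := by
  rw [hF]
  exact intervalIntegral.intervalIntegral_pos_of_pos_on hf.intervalIntegrable
    (fun w hw => hpos w hw.1) hu

lemma one_sub_cdf_eq_integral_Ioi (hf : Integrable f) (htotal : ∫ w in Ici (0:ℝ), f w = 1)
    (hF : ∀ u, F u = ∫ w in (0:ℝ)..u, f w) (u : ℝ) :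
    1 - F u = ∫ w in Ioi u, f w := by
  rw [← htotal, integral_Ici_eq_integral_Ioi, hF,
    ← intervalIntegral.integral_interval_add_Ioi hf.integrableOn hf.integrableOn,
    add_sub_cancel_left]

lemma cdf_lt_one (hpos : ∀ w, 0 < w → 0 < f w) (hf : Integrable f)
    (htotal : ∫ w in Ici (0:ℝ), f w = 1) (hF : ∀ u, F u = ∫ w in (0:ℝ)..u, f w)
    {u : ℝ} (hu : 0 ≤ u) : F u < 1 := by
  have := integral_Ioi_pos hf.integrableOn fun w hw => hpos w (hu.trans_lt hw)
  rw [← one_sub_cdf_eq_integral_Ioi hf htotal hF] at this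
  linarith

lemma mul_one_sub_cdf_le (hnn : ∀ w, 0 ≤ f w) (hf : Integrable f)
    (hwf : Integrable fun w => w * f w) (htotal : ∫ w in Ici (0:ℝ), f w = 1)
    (hF : ∀ u, F u = ∫ w in (0:ℝ)..u, f w) (u : ℝ) :
    u * (1 - F u) ≤ ∫ w in Ioi u, w * f w := by
  rw [one_sub_cdf_eq_integral_Ioi hf htotal hF, ← integral_const_mul]
  exact setIntegral_mono_on (hf.integrableOn.const_mul u) hwf.integrableOn measurableSet_Ioi
    fun w hw => mul_le_mul_of_nonneg_right (le_of_lt hw) (hnn w)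

lemma integral_cdf_eq (hcont : ContinuousOn f (Ici 0)) (hf : Integrable f)
    (hF : ∀ u, F u = ∫ w in (0:ℝ)..u, f w) {b : ℝ} (hb : 0 ≤ b) :
    ∫ w in (0:ℝ)..b, F w = b * F b - ∫ w in (0:ℝ)..b, w * f w := by
  have hderiv : ∀ x ∈ Ioo (min 0 b) (max 0 b), HasDerivAt F (f x) x := by
    intro x hx
    rw [min_eq_left hb] at hx
    rw [funext hF]
    exact intervalIntegral.integral_hasDerivAt_right hf.intervalIntegrable
      hf.aestronglyMeasurable.stronglyMeasurableAtFilter (hcont.continuousAt (Ici_mem_nhds hx.1))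
  have := intervalIntegral.integral_mul_deriv_eq_deriv_mul_of_hasDerivAt
    continuousOn_id (continuous_cdf hf hF).continuousOn (fun x _ => hasDerivAt_id x) hderiv
    intervalIntegrable_const hf.intervalIntegrable
  simp only [id, one_mul, zero_mul, sub_zero] at this
  linarith

lemma intervalIntegral_one_sub_cdf_le_mean (hnn : ∀ w, 0 ≤ f w) (hcont : ContinuousOn f (Ici 0))
    (hf : Integrable f) (hwf : Integrable fun w => w * f w)
    (htotal : ∫ w in Ici (0:ℝ), f w = 1) (hF : ∀ u, F u = ∫ w in (0:ℝ)..u, f w)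
    {b : ℝ} (hb : 0 ≤ b) : ∫ w in (0:ℝ)..b, (1 - F w) ≤ ∫ w in Ioi 0, w * f w := by
  have hFint : IntervalIntegrable F volume 0 b :=
    (cdf_monotone hnn hf hF).intervalIntegrable
  rw [intervalIntegral.integral_sub intervalIntegrable_const hFint, integral_cdf_eq hcont hf hF hb,
    ← intervalIntegral.integral_interval_add_Ioi hwf.integrableOn hwf.integrableOn]
  have := mul_one_sub_cdf_le hnn hf hwf htotal hF b
  simp only [intervalIntegral.integral_const, sub_zero, smul_eq_mul, mul_one]
  linarith

lemma integrableOn_one_sub_cdf (hnn : ∀ w, 0 ≤ f w) (hcont : ContinuousOn f (Ici 0))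
    (hpos : ∀ w, 0 < w → 0 < f w) (hf : Integrable f) (hwf : Integrable fun w => w * f w)
    (htotal : ∫ w in Ici (0:ℝ), f w = 1) (hF : ∀ u, F u = ∫ w in (0:ℝ)..u, f w) :
    IntegrableOn (fun w => 1 - F w) (Ioi 0) :=
  integrableOn_Ioi_of_intervalIntegral_le (continuous_const.sub (continuous_cdf hf hF))
    (fun _ hw => sub_nonneg.2 (cdf_lt_one hpos hf htotal hF hw.le).le)
    fun _ hb => intervalIntegral_one_sub_cdf_le_mean hnn hcont hf hwf htotal hF hb

lemma integral_one_sub_cdf_le_mean (hnn : ∀ w, 0 ≤ f w) (hcont : ContinuousOn f (Ici 0))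
    (hpos : ∀ w, 0 < w → 0 < f w) (hf : Integrable f) (hwf : Integrable fun w => w * f w)
    (htotal : ∫ w in Ici (0:ℝ), f w = 1) (hF : ∀ u, F u = ∫ w in (0:ℝ)..u, f w) :
    ∫ w in Ioi 0, (1 - F w) ≤ ∫ w in Ioi 0, w * f w :=
  setIntegral_Ioi_le_of_intervalIntegral_le
    (integrableOn_one_sub_cdf hnn hcont hpos hf hwf htotal hF)
    fun _ hb => intervalIntegral_one_sub_cdf_le_mean hnn hcont hf hwf htotal hF hb

end Cdf

/-- `X_B(u)`. At `u = 0` the second summand is `0 / 0 = 0`, so the value there is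
`∫ w in Ici 0, (1 - F w)` and the function is continuous on `[0, ∞)`. -/
noncomputable def reputationalGap (F : ℝ → ℝ) (u : ℝ) : ℝ :=
  (∫ w in Ici u, (1 - F w)) / (1 - F u) + (∫ w in (0:ℝ)..u, F w) / F u

section ReputationalGap

variable {F : ℝ → ℝ}

lemma reputationalGap_zero (hF0 : F 0 = 0) :
    reputationalGap F 0 = ∫ w in Ici (0:ℝ), (1 - F w) := by
  simp [reputationalGap, hF0]

lemma reputationalGap_pos (hFnn : ∀ w, 0 ≤ w → 0 ≤ F w) (hFlt : ∀ w, 0 ≤ w → F w < 1)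
    (hint : IntegrableOn (fun w => 1 - F w) (Ioi 0)) {u : ℝ} (hu : 0 ≤ u) :
    0 < reputationalGap F u := by
  have htail : 0 < ∫ w in Ici u, (1 - F w) := by
    rw [integral_Ici_eq_integral_Ioi]
    exact integral_Ioi_pos (hint.mono_set (Ioi_subset_Ioi hu))
      fun w hw => sub_pos.2 (hFlt w (hu.trans hw.le))
  have hhead : 0 ≤ (∫ w in (0:ℝ)..u, F w) / F u :=
    div_nonneg (intervalIntegral.integral_nonneg hu fun w hw => hFnn w hw.1) (hFnn u hu)
  exact add_pos_of_pos_of_nonneg (div_pos htail (sub_pos.2 (hFlt u hu))) hhead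

lemma tendsto_integral_div_nhdsGE_zero (hmono : Monotone F) (hF0 : F 0 = 0)
    (hFpos : ∀ u, 0 < u → 0 < F u) :
    Tendsto (fun u => (∫ w in (0:ℝ)..u, F w) / F u) (𝓝[≥] 0) (𝓝 0) := by
  refine tendsto_of_tendsto_of_tendsto_of_le_of_le' tendsto_const_nhds
    (tendsto_nhdsWithin_of_tendsto_nhds tendsto_id) ?_ ?_
  all_goals
    filter_upwards [self_mem_nhdsWithin] with u (hu : 0 ≤ u)
    rcases hu.eq_or_lt with rfl | hu
    · simp
  · exact div_nonneg (intervalIntegral.integral_nonneg hu.le fun w hw => hF0 ▸ hmono hw.1)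
      (hFpos u hu).le
  · exact integral_div_le_of_monotone hu.le hmono (hFpos u hu)

lemma continuousOn_reputationalGap (hcont : Continuous F) (hmono : Monotone F) (hF0 : F 0 = 0)
    (hFpos : ∀ u, 0 < u → 0 < F u) (hFlt : ∀ w, 0 ≤ w → F w < 1)
    (hint : IntegrableOn (fun w => 1 - F w) (Ioi 0)) :
    ContinuousOn (reputationalGap F) (Ici 0) := by
  have htail : ContinuousOn (fun u => (∫ w in Ici u, (1 - F w)) / (1 - F u)) (Ici 0) :=
    (continuousOn_integral_Ici (continuous_const.sub hcont) hint).div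
      (continuous_const.sub hcont).continuousOn fun u hu => (sub_pos.2 (hFlt u hu)).ne'
  have hhead : ContinuousOn (fun u => (∫ w in (0:ℝ)..u, F w) / F u) (Ici 0) := by
    intro u hu
    rcases (show (0:ℝ) ≤ u from hu).eq_or_lt with rfl | hu
    · simpa [ContinuousWithinAt, hF0] using tendsto_integral_div_nhdsGE_zero hmono hF0 hFpos
    · exact ((intervalIntegral.continuous_primitive
        (fun _ _ => hcont.intervalIntegrable _ _) 0).continuousAt.div hcont.continuousAt
        (hFpos u hu).ne').continuousWithinAt
  exact htail.add hhead

end ReputationalGap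

theorem typeB_mfe_exists_general (f : ℝ → ℝ) (hcont : ContinuousOn f (Set.Ici 0))
    (hnn : ∀ w, 0 ≤ f w) (hsupp : ∀ w, w < 0 → f w = 0)
    (hpos : ∀ w, 0 < w → 0 < f w)
    (hint : IntegrableOn f (Set.Ici 0))
    (htotal : (∫ w in Set.Ici (0:ℝ), f w) = 1)
    (hmean : IntegrableOn (fun w => w * f w) (Set.Ici 0))
    (F : ℝ → ℝ) (hF : ∀ u, F u = ∫ w in (0:ℝ)..u, f w)
    (α β θ : ℝ) (hα : 0 < α) (hβ : 0 < β) (hθ : 0 < θ)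
    (hcond : β * (∫ w in Set.Ici (0:ℝ), w * f w) < α * θ ^ 2 / 2)
    (XB : ℝ → ℝ)
    (hXB : ∀ u, 0 < u →
      XB u = (∫ w in Set.Ici u, (1 - F w)) / (1 - F u) + (∫ w in (0:ℝ)..u, F w) / F u) :
    ∃ u ∈ Set.Icc (0:ℝ) (α * θ), β * XB u = (α * θ - u) ^ 2 / (2 * α) := by
  have hf : Integrable f := integrable_of_integrableOn_Ici hsupp hint
  have hwf : Integrable fun w => w * f w :=
    integrable_of_integrableOn_Ici (fun w hw => by simp [hsupp w hw]) hmean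
  have hmono := cdf_monotone hnn hf hF
  have hF0 : F 0 = 0 := by simp [hF]
  have hFlt := fun u (hu : 0 ≤ u) => cdf_lt_one hpos hf htotal hF hu
  have hGint := integrableOn_one_sub_cdf hnn hcont hpos hf hwf htotal hF
  set g := fun u => β * reputationalGap F u - (α * θ - u) ^ 2 / (2 * α) with hg
  have hg_cont : ContinuousOn g (Icc 0 (α * θ)) := by
    have : ContinuousOn (reputationalGap F) (Icc 0 (α * θ)) :=
      (continuousOn_reputationalGap (continuous_cdf hf hF) hmono hF0
        (fun u hu => cdf_pos hpos hf hF hu) hFlt hGint).mono Icc_subset_Ici_self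
    simp only [hg]
    fun_prop
  have hg0 : g 0 < 0 := by
    have hgap0 : reputationalGap F 0 ≤ ∫ w in Ici (0:ℝ), w * f w := by
      rw [reputationalGap_zero hF0, integral_Ici_eq_integral_Ioi, integral_Ici_eq_integral_Ioi]
      exact integral_one_sub_cdf_le_mean hnn hcont hpos hf hwf htotal hF
    have hq0 : (α * θ - 0) ^ 2 / (2 * α) = α * θ ^ 2 / 2 := by field_simp; ring
    simp only [hg, hq0]
    linarith [mul_le_mul_of_nonneg_left hgap0 hβ.le]
  have hgT : 0 < g (α * θ) := by
    have := reputationalGap_pos (fun w hw => hF0 ▸ hmono hw) hFlt hGint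
      (by positivity : 0 ≤ α * θ)
    simpa [hg] using mul_pos hβ this
  obtain ⟨c, hc, hgc⟩ := intermediate_value_Icc (by positivity) hg_cont ⟨hg0.le, hgT.le⟩
  have hc0 : 0 < c := hc.1.lt_of_ne (by rintro rfl; exact hg0.ne hgc)
  refine ⟨c, hc, ?_⟩
  rw [hXB c hc0]
  simp only [hg, reputationalGap] at hgc
  linarith

/-- If θ > √(2βE[w]/α) (i.e. βE[w] < αθ²/2), then there is a cutoff
u ∈ [0, αθ] with β·X_B(u) = (αθ − u)²/(2α), where X_B(0) = E[w] and for u > 0,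
X_B(u) = (∫ᵤ^∞ (1 − F))/(1 − F(u)) + (∫₀ᵘ F)/F(u). -/
theorem typeB_mfe_exists (f : ℝ → ℝ) (hcont : ContinuousOn f (Set.Ici 0))
    (hnn : ∀ w, 0 ≤ f w) (hsupp : ∀ w, w < 0 → f w = 0)
    (hpos : ∀ w, 0 < w → 0 < f w)
    (hint : IntegrableOn f (Set.Ici 0))
    (htotal : (∫ w in Set.Ici (0:ℝ), f w) = 1)
    (hmean : IntegrableOn (fun w => w * f w) (Set.Ici 0))
    (F : ℝ → ℝ) (hF : ∀ u, F u = ∫ w in (0:ℝ)..u, f w)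
    (α β θ : ℝ) (hα : 0 < α) (hβ : 0 < β) (hθ : 0 < θ)
    (hcond : β * (∫ w in Set.Ici (0:ℝ), w * f w) < α * θ ^ 2 / 2)
    (XB : ℝ → ℝ)
    (hXB0 : XB 0 = ∫ w in Set.Ici (0:ℝ), w * f w)
    (hXB : ∀ u, 0 < u →
      XB u = (∫ w in Set.Ici u, (1 - F w)) / (1 - F u) + (∫ w in (0:ℝ)..u, F w) / F u) :
    ∃ u ∈ Set.Icc (0:ℝ) (α * θ), β * XB u = (α * θ - u) ^ 2 / (2 * α) :=
  typeB_mfe_exists_general f hcont hnn hsupp hpos hint htotal hmean F hF α β θ hα hβ hθ hcond XB hXB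
end

section
/- Let f be a continuous nonnegative probability density supported on [0, ∞) with finite mean E[w] = ∫₀^∞ w f(w)dw, and let α > 0, β > 0, θ > 0 satisfy ∫₀^{αθ} (θ − w/α) f(w)dw > β. For w ≥ 0 let a_A(w) be the unique nonnegative solution of a = w/α + β(1 − exp(−a/β)). Then θ·∫₀^{αθ} f(w)dw + (1/α)·∫_{αθ}^∞ w f(w)dw > ∫₀^∞ a_A(w) f(w)dw. (That is, the aggregate prosocial action W_B under type-B feedback with equilibrium cutoff u = 0 strictly exceeds the aggregate prosocial action W_A under full-revelation type-A feedback: being economical with the truth improves net prosociality.) -/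
open MeasureTheory

/-- If ∫₀^{αθ} (θ − w/α) f(w) dw > β, then the type-B aggregate prosocial
action with cutoff u = 0, namely θ∫₀^{αθ} f + (1/α)∫_{αθ}^∞ w f, strictly exceeds the
type-A aggregate ∫₀^∞ a_A(w) f(w) dw. -/
theorem WB_gt_WA (f : ℝ → ℝ) (hcont : ContinuousOn f (Set.Ici 0))
    (hnn : ∀ w, 0 ≤ f w) (hsupp : ∀ w, w < 0 → f w = 0)
    (hint : IntegrableOn f (Set.Ici 0))
    (htotal : (∫ w in Set.Ici (0:ℝ), f w) = 1)
    (hmean : IntegrableOn (fun w => w * f w) (Set.Ici 0))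
    (α β θ : ℝ) (hα : 0 < α) (hβ : 0 < β) (hθ : 0 < θ)
    (hcond : β < ∫ w in (0:ℝ)..(α * θ), (θ - w / α) * f w)
    (aA : ℝ → ℝ)
    (haA : ∀ w, 0 ≤ w → 0 ≤ aA w ∧ aA w = w / α + β * (1 - Real.exp (-(aA w) / β))) :
    (∫ w in Set.Ici (0:ℝ), aA w * f w) <
      θ * (∫ w in (0:ℝ)..(α * θ), f w) + (1 / α) * ∫ w in Set.Ici (α * θ), w * f w := by
  set s : ℝ := α * θ with hs_def
  have hs : 0 < s := mul_pos hα hθ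
  have hIocsub : Set.Ioc (0:ℝ) s ⊆ Set.Ici 0 :=
    fun x hx => le_of_lt hx.1
  have hIoisub : Set.Ioi s ⊆ Set.Ici (0:ℝ) :=
    fun x hx => le_of_lt (lt_trans hs hx)
  -- integrability pieces
  have hwf_Ioc : IntegrableOn (fun w => w * f w) (Set.Ioc 0 s) := hmean.mono_set hIocsub
  have hwf_Ioi : IntegrableOn (fun w => w * f w) (Set.Ioi s) := hmean.mono_set hIoisub
  have hf_Ioc : IntegrableOn f (Set.Ioc 0 s) := hint.mono_set hIocsub
  have hI1 : IntervalIntegrable f volume 0 s :=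
    (intervalIntegrable_iff_integrableOn_Ioc_of_le hs.le).2 hf_Ioc
  have hI2 : IntervalIntegrable (fun w => w * f w) volume 0 s :=
    (intervalIntegrable_iff_integrableOn_Ioc_of_le hs.le).2 hwf_Ioc
  -- rewrite hcond
  have hcond' : β < θ * (∫ w in (0:ℝ)..s, f w) - (1/α) * ∫ w in (0:ℝ)..s, w * f w := by
    have heq : (∫ w in (0:ℝ)..s, (θ - w / α) * f w)
        = θ * (∫ w in (0:ℝ)..s, f w) - (1/α) * ∫ w in (0:ℝ)..s, w * f w := by
      rw [← intervalIntegral.integral_const_mul, ← intervalIntegral.integral_const_mul,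
        ← intervalIntegral.integral_sub (hI1.const_mul θ) (hI2.const_mul (1/α))]
      apply intervalIntegral.integral_congr
      intro w _
      field_simp
    linarith [hcond, heq.symm.le]
  -- split the mean integral
  have hsplit : (∫ w in Set.Ici (0:ℝ), w * f w)
      = (∫ w in (0:ℝ)..s, w * f w) + ∫ w in Set.Ici s, w * f w := by
    rw [intervalIntegral.integral_of_le hs.le, MeasureTheory.integral_Ici_eq_integral_Ioi,
      MeasureTheory.integral_Ici_eq_integral_Ioi,
      ← MeasureTheory.setIntegral_union (Set.Ioc_disjoint_Ioi le_rfl) measurableSet_Ioi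
        hwf_Ioc hwf_Ioi, Set.Ioc_union_Ioi_eq_Ioi hs.le]
  -- bound aA pointwise
  have hbound : ∀ w ∈ Set.Ici (0:ℝ), aA w * f w ≤ (w / α + β) * f w := by
    intro w hw
    obtain ⟨h0, heq⟩ := haA w hw
    have hexp : 0 < Real.exp (-(aA w) / β) := Real.exp_pos _
    have : aA w ≤ w / α + β := by nlinarith
    exact mul_le_mul_of_nonneg_right this (hnn w)
  have hg_int : IntegrableOn (fun w => (w / α + β) * f w) (Set.Ici 0) := by
    have : IntegrableOn (fun w => (1/α) * (w * f w) + β * f w) (Set.Ici 0) :=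
      (hmean.const_mul (1/α)).add (hint.const_mul β)
    apply this.congr_fun _ measurableSet_Ici
    intro w _
    field_simp
  have hA_le : (∫ w in Set.Ici (0:ℝ), aA w * f w)
      ≤ ∫ w in Set.Ici (0:ℝ), (w / α + β) * f w := by
    apply MeasureTheory.integral_mono_of_nonneg
    · filter_upwards [MeasureTheory.ae_restrict_mem measurableSet_Ici] with w hw
      exact mul_nonneg (haA w hw).1 (hnn w)
    · exact hg_int
    · filter_upwards [MeasureTheory.ae_restrict_mem measurableSet_Ici] with w hw
      exact hbound w hw
  have hg_eval : (∫ w in Set.Ici (0:ℝ), (w / α + β) * f w)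
      = (1/α) * (∫ w in Set.Ici (0:ℝ), w * f w) + β := by
    have h1 : (∫ w in Set.Ici (0:ℝ), (w / α + β) * f w)
        = ∫ w in Set.Ici (0:ℝ), ((1/α) * (w * f w) + β * f w) := by
      apply MeasureTheory.setIntegral_congr_fun measurableSet_Ici
      intro w _
      field_simp
    rw [h1, MeasureTheory.integral_add (hmean.const_mul (1/α)) (hint.const_mul β),
      integral_const_mul, integral_const_mul, htotal, mul_one]
  have hα' : (0:ℝ) < 1/α := by positivity
  have hMsplit : (1/α) * (∫ w in Set.Ici (0:ℝ), w * f w)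
      = (1/α) * (∫ w in (0:ℝ)..s, w * f w) + (1/α) * ∫ w in Set.Ici s, w * f w := by
    rw [hsplit]; ring
  linarith [hA_le, hg_eval, hcond', hMsplit]
end
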